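/- arXiv:1202.2998 — 2 statements merged into one kernel-verified Lean document; each statement's English description precedes it below -/
import Mathlib

section
/- For fixed ν > 0, the function M(ν, q) = Σ_{k=1}^∞ k^ν q^{k-1}(1-q) is strictly increasing in q on the interval (0, 1). -/
open Real

/-- The ν-th moment of a geometric random variable on {1,2,...} with success
probability `1 - q`: `M ν q = ∑_{k=1}^∞ k^ν q^(k-1) (1-q)`. -/
noncomputable def geomMoment (ν q : ℝ) : ℝ :=
  ∑' k : ℕ, ((k : ℝ) + 1) ^ ν * q ^ k * (1 - q)

lemma summable_aux (ν q : ℝ) (hq0 : 0 < q) (hq1 : q < 1) :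
    Summable (fun k : ℕ => ((k : ℝ) + 1) ^ ν * q ^ k) := by
  set n := ⌈ν⌉₊ with hn
  have hpow : Summable (fun k : ℕ => (k : ℝ) ^ n * q ^ k) :=
    summable_pow_mul_geometric_of_norm_lt_one n
      (by rw [Real.norm_eq_abs, abs_of_pos hq0]; exact hq1)
  have hshift : Summable (fun k : ℕ => ((k : ℝ) + 1) ^ n * q ^ (k + 1)) := by
    have := (summable_nat_add_iff 1).2 hpow
    simpa [pow_succ] using this
  have hshift' : Summable (fun k : ℕ => ((k : ℝ) + 1) ^ n * q ^ k) := by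
    have := hshift.div_const q
    refine this.congr fun k => ?_
    field_simp [pow_succ]
    ring
  refine Summable.of_nonneg_of_le (fun k => ?_) (fun k => ?_) hshift'
  · positivity
  · have h1 : (1 : ℝ) ≤ (k : ℝ) + 1 := by linarith [Nat.cast_nonneg (α := ℝ) k]
    have hle : ((k : ℝ) + 1) ^ ν ≤ ((k : ℝ) + 1) ^ (n : ℝ) :=
      Real.rpow_le_rpow_of_exponent_le h1 (Nat.le_ceil ν)
    rw [Real.rpow_natCast] at hle
    exact mul_le_mul_of_nonneg_right hle (by positivity)

lemma summable_aux2 (ν q : ℝ) (hν : 0 ≤ ν) (hq0 : 0 < q) (hq1 : q < 1) :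
    Summable (fun k : ℕ => (k : ℝ) ^ ν * q ^ k) := by
  refine Summable.of_nonneg_of_le (fun k => ?_) (fun k => ?_) (summable_aux ν q hq0 hq1)
  · positivity
  · refine mul_le_mul_of_nonneg_right ?_ (by positivity)
    exact Real.rpow_le_rpow (by positivity) (by linarith) hν

lemma summable_aux3 (ν q : ℝ) (hν : 0 ≤ ν) (hq0 : 0 < q) (hq1 : q < 1) :
    Summable (fun k : ℕ => (((k : ℝ) + 1) ^ ν - (k : ℝ) ^ ν) * q ^ k) := by
  have := (summable_aux ν q hq0 hq1).sub (summable_aux2 ν q hν hq0 hq1)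
  refine this.congr fun k => ?_
  ring

lemma geomMoment_eq (ν q : ℝ) (hν : 0 < ν) (hq0 : 0 < q) (hq1 : q < 1) :
    geomMoment ν q = ∑' k : ℕ, (((k : ℝ) + 1) ^ ν - (k : ℝ) ^ ν) * q ^ k := by
  have hS1 := summable_aux ν q hq0 hq1
  have hS2 := summable_aux2 ν q hν.le hq0 hq1
  have hshift : (∑' k : ℕ, (k : ℝ) ^ ν * q ^ k)
      = ∑' k : ℕ, ((k : ℝ) + 1) ^ ν * q ^ (k + 1) := by
    rw [Summable.tsum_eq_zero_add hS2]
    simp [Real.zero_rpow hν.ne']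
  have hS2' : Summable (fun k : ℕ => ((k : ℝ) + 1) ^ ν * q ^ (k + 1)) := by
    have := (summable_nat_add_iff 1).2 hS2
    refine this.congr fun k => ?_
    push_cast
    rfl
  unfold geomMoment
  have h1 : ∀ k : ℕ, ((k : ℝ) + 1) ^ ν * q ^ k * (1 - q)
      = ((k : ℝ) + 1) ^ ν * q ^ k - ((k : ℝ) + 1) ^ ν * q ^ (k + 1) := by
    intro k; ring
  rw [tsum_congr h1, Summable.tsum_sub hS1 hS2', ← hshift, ← Summable.tsum_sub hS1 hS2]
  exact tsum_congr fun k => by ring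

theorem geomMoment_strictMonoOn (ν : ℝ) (hν : 0 < ν) :
    StrictMonoOn (fun q => geomMoment ν q) (Set.Ioo (0 : ℝ) 1) := by
  rintro p ⟨hp0, hp1⟩ q ⟨hq0, hq1⟩ hpq
  simp only
  rw [geomMoment_eq ν p hν hp0 hp1, geomMoment_eq ν q hν hq0 hq1]
  have hb : ∀ k : ℕ, 0 ≤ ((k : ℝ) + 1) ^ ν - (k : ℝ) ^ ν := fun k =>
    sub_nonneg.2 (Real.rpow_le_rpow (by positivity) (by linarith) hν.le)
  refine Summable.tsum_lt_tsum (i := 1) (fun k => ?_) ?_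
      (summable_aux3 ν p hν.le hp0 hp1) (summable_aux3 ν q hν.le hq0 hq1)
  · exact mul_le_mul_of_nonneg_left (pow_le_pow_left₀ hp0.le hpq.le k) (hb k)
  · have hb1 : (0 : ℝ) < ((1 : ℝ) + 1) ^ ν - (1 : ℝ) ^ ν := by
      rw [Real.one_rpow]
      have : (1 : ℝ) < (2 : ℝ) ^ ν :=
        Real.one_lt_rpow_iff_of_pos (by norm_num) |>.2 (Or.inl ⟨by norm_num, hν⟩)
      norm_num
      linarith
    push_cast
    have : p ^ 1 < q ^ 1 := by simpa using hpq
    exact mul_lt_mul_of_pos_left (by simpa using hpq) hb1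
end

section
/- For 0 < q < 1, ν > 0, and k* = ⌊1/(1-q)⌋, one has Σ_{k=1}^∞ k^ν q^{k-2}[k(1-q)-1] > 0, since k^ν ≤ (k*)^ν whenever k(1-q) - 1 ≤ 0 and k^ν > (k*)^ν whenever k > k*. -/
/-!
Write the series as `∑ w k * a k` with increasing weights `w k = (k+1)^ν` and drift terms
`a k = q^(k-1) ((k+1)(1-q) - 1)` whose unweighted sum vanishes. With `m = ⌊(1-q)⁻¹⌋₊`, the factors
`w k - m^ν` and `a k` never have opposite signs, so `∑ w k * a k = ∑ (w k - m^ν) * a k` is a sum of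
nonnegative terms, and the term with `k + 1 = m + 1` is positive.
-/

theorem tsum_mul_pos_of_hasSum_zero {ι : Type*} {w a : ι → ℝ} {c : ℝ} (ha : HasSum a 0)
    (hwa : Summable fun i => w i * a i) (hsign : ∀ i, 0 ≤ (w i - c) * a i) {j : ι}
    (hj : 0 < (w j - c) * a j) : 0 < ∑' i, w i * a i := by
  have hcentered : HasSum (fun i => (w i - c) * a i) (∑' i, w i * a i) := by
    simpa [sub_mul] using hwa.hasSum.sub (ha.mul_left c)
  exact hcentered.tsum_eq ▸ hcentered.summable.tsum_pos hsign j hj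

theorem summable_rpow_mul_geometric_of_norm_lt_one (p : ℝ) {r : ℝ} (hr : ‖r‖ < 1) :
    Summable fun n : ℕ => (n : ℝ) ^ p * r ^ n := by
  refine Summable.of_norm_bounded_eventually_nat
    (summable_pow_mul_geometric_of_norm_lt_one ⌈p⌉₊ (r := ‖r‖) (by simpa using hr)) ?_
  filter_upwards [Filter.eventually_ge_atTop 1] with n hn
  have hn' : (1 : ℝ) ≤ n := by exact_mod_cast hn
  rw [norm_mul, norm_pow, Real.norm_of_nonneg (by positivity)]
  gcongr ?_ * _
  exact_mod_cast Real.rpow_le_rpow_of_exponent_le hn' (Nat.le_ceil p)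

theorem rpow_sub_floor_mul_sub_one_nonneg {s ν : ℝ} (hs : 0 < s) (hν : 0 ≤ ν) (n : ℕ) :
    0 ≤ ((n : ℝ) ^ ν - (⌊s⁻¹⌋₊ : ℝ) ^ ν) * (n * s - 1) := by
  rcases le_or_gt n ⌊s⁻¹⌋₊ with hn | hn
  · have hns : (n : ℝ) * s ≤ 1 :=
      calc (n : ℝ) * s ≤ s⁻¹ * s := by gcongr; exact (Nat.le_floor_iff (by positivity)).1 hn
        _ = 1 := inv_mul_cancel₀ hs.ne'
    have hw : (n : ℝ) ^ ν ≤ (⌊s⁻¹⌋₊ : ℝ) ^ ν := by gcongr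
    exact mul_nonneg_of_nonpos_of_nonpos (by linarith) (by linarith)
  · have hns : 1 < (n : ℝ) * s := by
      rw [← inv_lt_iff_one_lt_mul₀ hs]
      exact Nat.floor_lt (by positivity) |>.1 hn
    have hw : (⌊s⁻¹⌋₊ : ℝ) ^ ν ≤ (n : ℝ) ^ ν := by gcongr
    exact mul_nonneg (by linarith) (by linarith)

theorem rpow_sub_floor_mul_sub_one_pos {s ν : ℝ} (hs : 0 < s) (hν : 0 < ν) :
    0 < (((⌊s⁻¹⌋₊ + 1 : ℕ) : ℝ) ^ ν - (⌊s⁻¹⌋₊ : ℝ) ^ ν) * ((⌊s⁻¹⌋₊ + 1 : ℕ) * s - 1) := by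
  have hns : 1 < ((⌊s⁻¹⌋₊ + 1 : ℕ) : ℝ) * s := by
    rw [← inv_lt_iff_one_lt_mul₀ hs]
    exact_mod_cast Nat.lt_floor_add_one s⁻¹
  have hw : (⌊s⁻¹⌋₊ : ℝ) ^ ν < ((⌊s⁻¹⌋₊ + 1 : ℕ) : ℝ) ^ ν := by
    gcongr
    exact_mod_cast Nat.lt_succ_self _
  exact mul_pos (by linarith) (by linarith)

noncomputable def geomDrift (q : ℝ) (k : ℕ) : ℝ := q ^ ((k : ℤ) - 1) * (((k : ℝ) + 1) * (1 - q) - 1)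

section geomDrift

variable {q : ℝ} (hq0 : 0 < q) (hq1 : q < 1)
include hq0 hq1

theorem hasSum_geomDrift_zero : HasSum (geomDrift q) 0 := by
  have hq : ‖q‖ < 1 := by rwa [Real.norm_of_nonneg hq0.le]
  have h1q : 1 - q ≠ 0 := by linarith
  have h := ((hasSum_coe_mul_geometric_of_norm_lt_one hq).mul_left ((1 - q) / q)).sub
    (hasSum_geometric_of_lt_one hq0.le hq1)
  rw [show (1 - q) / q * (q / (1 - q) ^ 2) - (1 - q)⁻¹ = 0 by field_simp; ring] at h
  refine h.congr_fun fun k => ?_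
  rw [geomDrift, zpow_sub₀ hq0.ne', zpow_natCast, zpow_one]
  field_simp
  ring

theorem summable_rpow_mul_geomDrift (ν : ℝ) :
    Summable fun k : ℕ => ((k : ℝ) + 1) ^ ν * geomDrift q k := by
  have hq : ‖q‖ < 1 := by rwa [Real.norm_of_nonneg hq0.le]
  have hshift (p : ℝ) : Summable fun k : ℕ => ((k : ℝ) + 1) ^ p * q ^ (k + 1) := by
    simpa using (summable_nat_add_iff 1).2 (summable_rpow_mul_geometric_of_norm_lt_one p hq)
  refine (((hshift (ν + 1)).mul_left ((1 - q) / q ^ 2)).sub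
    ((hshift ν).mul_left (q ^ 2)⁻¹)).congr fun k => ?_
  have hk : (k : ℝ) + 1 ≠ 0 := by positivity
  rw [geomDrift, Real.rpow_add_one hk, zpow_sub₀ hq0.ne', zpow_natCast, zpow_one]
  field_simp
  ring

end geomDrift

/-- For `0 < q < 1` and `ν > 0`, the weighted series
`∑_{k=1}^∞ k^ν q^(k-2) [k(1-q) - 1]` is strictly positive.
(Summation variable shifted: index `k : ℕ` corresponds to the original `k + 1 ≥ 1`.) -/
theorem geom_weighted_drift_series_pos (q ν : ℝ) (hq0 : 0 < q) (hq1 : q < 1)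
    (hν : 0 < ν) :
    0 < ∑' k : ℕ, ((k : ℝ) + 1) ^ ν * q ^ ((k : ℤ) - 1) *
      (((k : ℝ) + 1) * (1 - q) - 1) := by
  have hs : 0 < 1 - q := by linarith
  have hsign (k : ℕ) :
      0 ≤ (((k : ℝ) + 1) ^ ν - (⌊(1 - q)⁻¹⌋₊ : ℝ) ^ ν) * geomDrift q k := by
    rw [geomDrift, mul_left_comm]
    exact mul_nonneg (zpow_pos hq0 _).le
      (by exact_mod_cast rpow_sub_floor_mul_sub_one_nonneg hs hν.le (k + 1))
  have hpos : 0 < (((⌊(1 - q)⁻¹⌋₊ : ℝ) + 1) ^ ν - (⌊(1 - q)⁻¹⌋₊ : ℝ) ^ ν) *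
      geomDrift q ⌊(1 - q)⁻¹⌋₊ := by
    rw [geomDrift, mul_left_comm]
    exact mul_pos (zpow_pos hq0 _) (by exact_mod_cast rpow_sub_floor_mul_sub_one_pos hs hν)
  simpa only [geomDrift, mul_assoc] using tsum_mul_pos_of_hasSum_zero
    (hasSum_geomDrift_zero hq0 hq1) (summable_rpow_mul_geomDrift hq0 hq1 ν) hsign hpos
end
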